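/- arXiv:1203.2494 — 7 statements merged into one kernel-verified Lean document; each statement's English description precedes it below -/
import Mathlib

section
/- Let γ > 0, c > 0 and z > 0. Let ν̂ be the measure on (0,∞) with density h ↦ c·h^{-1-γ} with respect to Lebesgue measure. Then the pushforward of ν̂ under the map φ_z : h ↦ h/(h+z) is the measure on (0,1) with density r ↦ c·z^{-γ}·r^{-1-γ}(1-r)^{γ-1} with respect to Lebesgue measure. In particular, for α ∈ (0,2) the pushforward of c·h^{-1-α}dh under φ_z equals z^{-α} times the measure r^{-2}·c·Beta(2-α,α)(dr), and for α' ∈ (0,1) the pushforward of c'·h^{-1-α'}dh under φ_z equals z^{-α'} times the measure r^{-1}·c'·Beta(1-α',α')(dr). -/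
/-!
The map `φ_z` is inverted on `(0,1)` by `ψ(r) = z r / (1 - r)`, a bijection of `(0,1)` onto
`(0,∞)` with `ψ'(r) = z / (1 - r)²`. Pushing forward along `φ_z` is therefore the change of
variables `h = ψ(r)`, and the density `c ψ(r)^{-1-γ} ψ'(r)` simplifies to
`c z^{-γ} r^{-1-γ} (1 - r)^{γ-1}`. The two special cases only regroup the powers of `r`.
-/

open MeasureTheory Real Set

theorem map_withDensity_image_eq_withDensity_abs_deriv_mul {s : Set ℝ} {φ ψ ψ' : ℝ → ℝ}
    (hs : MeasurableSet s) (hψ' : ∀ x ∈ s, HasDerivWithinAt ψ (ψ' x) s x)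
    (hφ : Measurable φ) (hφψ : LeftInvOn φ ψ s) (g : ℝ → ENNReal) :
    Measure.map φ ((volume.restrict (ψ '' s)).withDensity g) =
      (volume.restrict s).withDensity fun x => ENNReal.ofReal |ψ' x| * g (ψ x) := by
  ext A hA
  have hpre : φ ⁻¹' A ∩ ψ '' s = ψ '' (s ∩ A) := by
    ext h
    constructor
    · rintro ⟨hA, x, hx, rfl⟩
      exact ⟨x, ⟨hx, by rwa [mem_preimage, hφψ hx] at hA⟩, rfl⟩
    · rintro ⟨x, ⟨hx, hxA⟩, rfl⟩
      exact ⟨by rwa [mem_preimage, hφψ hx], x, hx, rfl⟩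
  rw [Measure.map_apply hφ hA, withDensity_apply _ (hφ hA), withDensity_apply _ hA,
    Measure.restrict_restrict (hφ hA), hpre, Measure.restrict_restrict hA, inter_comm A,
    lintegral_image_eq_lintegral_abs_deriv_mul (hs.inter hA)
      (fun x hx => (hψ' x hx.1).mono inter_subset_left) (hφψ.injOn.mono inter_subset_left)]

section StableLevy

variable {z : ℝ}

theorem leftInvOn_div_add_mul_div_one_sub (hz : 0 < z) :
    LeftInvOn (fun h : ℝ => h / (h + z)) (fun r => z * r / (1 - r)) (Ioo 0 1) := by
  intro r ⟨_, hr1⟩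
  have : 1 - r ≠ 0 := by linarith
  field_simp
  ring

theorem image_mul_div_one_sub_Ioo (hz : 0 < z) :
    (fun r : ℝ => z * r / (1 - r)) '' Ioo 0 1 = Ioi 0 := by
  refine Subset.antisymm ?_ fun h (hh : 0 < h) => ⟨h / (h + z), ⟨by positivity, ?_⟩, ?_⟩
  · rintro _ ⟨r, ⟨hr0, hr1⟩, rfl⟩
    exact div_pos (mul_pos hz hr0) (by linarith)
  · rw [div_lt_one (by positivity)]
    linarith
  · have : h + z ≠ 0 := by positivity
    field_simp
    simp [hz.ne']

theorem hasDerivAt_mul_div_one_sub {r : ℝ} (hr : r ≠ 1) :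
    HasDerivAt (fun r : ℝ => z * r / (1 - r)) (z / (1 - r) ^ 2) r := by
  have h := ((hasDerivAt_id r).const_mul z).div ((hasDerivAt_id r).const_sub 1)
    (sub_ne_zero.2 hr.symm)
  exact h.congr_deriv (by simp only [id]; ring)

theorem div_one_sub_sq_mul_rpow_mul_div_one_sub (c γ : ℝ) (hz : 0 < z) {r : ℝ}
    (hr : r ∈ Ioo (0 : ℝ) 1) :
    z / (1 - r) ^ 2 * (c * (z * r / (1 - r)) ^ (-1 - γ)) =
      c * z ^ (-γ) * r ^ (-1 - γ) * (1 - r) ^ (γ - 1) := by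
  obtain ⟨hr0, hr1⟩ := hr
  have hu : 0 < 1 - r := by linarith
  have hzγ : z ^ (-γ) = z ^ (-1 - γ) * z := by
    rw [← rpow_add_one hz.ne']
    ring_nf
  have huγ : (1 - r) ^ (γ - 1) = (1 - r) ^ (-(-1 - γ)) / (1 - r) ^ 2 := by
    rw [← rpow_natCast, ← rpow_sub hu]
    ring_nf
  rw [div_rpow (by positivity) hu.le, mul_rpow hz.le hr0.le, hzγ, huγ, rpow_neg hu.le]
  field_simp

theorem map_div_add_withDensity_Ioi_rpow (c γ : ℝ) (hz : 0 < z) :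
    Measure.map (fun h : ℝ => h / (h + z))
        ((volume.restrict (Ioi (0:ℝ))).withDensity
          fun h => ENNReal.ofReal (c * h ^ (-1 - γ))) =
      (volume.restrict (Ioo (0:ℝ) 1)).withDensity
        fun r => ENNReal.ofReal (c * z ^ (-γ) * r ^ (-1 - γ) * (1 - r) ^ (γ - 1)) := by
  rw [← image_mul_div_one_sub_Ioo hz,
    map_withDensity_image_eq_withDensity_abs_deriv_mul measurableSet_Ioo
      (fun r hr => (hasDerivAt_mul_div_one_sub hr.2.ne).hasDerivWithinAt) (by fun_prop)
      (leftInvOn_div_add_mul_div_one_sub hz)]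
  refine withDensity_congr_ae (ae_restrict_of_forall_mem measurableSet_Ioo fun r hr => ?_)
  beta_reduce
  rw [abs_of_nonneg (by positivity), ← ENNReal.ofReal_mul (by positivity),
    div_one_sub_sq_mul_rpow_mul_div_one_sub c γ hz hr]

theorem map_div_add_withDensity_Ioi_rpow_eq_smul (k c α : ℝ) (hz : 0 < z) :
    Measure.map (fun h : ℝ => h / (h + z))
        ((volume.restrict (Ioi (0:ℝ))).withDensity
          fun h => ENNReal.ofReal (c * h ^ (-1 - α))) =
      ENNReal.ofReal (z ^ (-α)) •
        (volume.restrict (Ioo (0:ℝ) 1)).withDensity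
          fun r => ENNReal.ofReal (r ^ (-k) * (c * r ^ ((k - α) - 1) * (1 - r) ^ (α - 1))) := by
  rw [map_div_add_withDensity_Ioi_rpow c α hz, ← withDensity_smul' _ _ ENNReal.ofReal_ne_top]
  refine withDensity_congr_ae (ae_restrict_of_forall_mem measurableSet_Ioo fun r hr => ?_)
  have hpow : r ^ (-k) * r ^ ((k - α) - 1) = r ^ (-1 - α) := by
    rw [← rpow_add hr.1]
    ring_nf
  beta_reduce
  rw [Pi.smul_apply, smul_eq_mul, ← ENNReal.ofReal_mul (by positivity), ← hpow]
  congr 1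
  ring

end StableLevy

theorem stmt0_general (γ c z : ℝ) (hz : 0 < z) :
    (Measure.map (fun h : ℝ => h / (h + z))
        ((volume.restrict (Ioi (0:ℝ))).withDensity
          fun h => ENNReal.ofReal (c * h ^ (-1 - γ))) =
      (volume.restrict (Ioo (0:ℝ) 1)).withDensity
        fun r => ENNReal.ofReal (c * z ^ (-γ) * r ^ (-1 - γ) * (1 - r) ^ (γ - 1)))
    ∧ (∀ α ∈ Ioo (0:ℝ) 2,
        Measure.map (fun h : ℝ => h / (h + z))
          ((volume.restrict (Ioi (0:ℝ))).withDensity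
            fun h => ENNReal.ofReal (c * h ^ (-1 - α))) =
        ENNReal.ofReal (z ^ (-α)) •
          (volume.restrict (Ioo (0:ℝ) 1)).withDensity
            fun r => ENNReal.ofReal (r ^ (-2 : ℝ) *
              (c * r ^ ((2 - α) - 1) * (1 - r) ^ (α - 1))))
    ∧ (∀ α' ∈ Ioo (0:ℝ) 1, ∀ c' : ℝ, 0 < c' →
        Measure.map (fun h : ℝ => h / (h + z))
          ((volume.restrict (Ioi (0:ℝ))).withDensity
            fun h => ENNReal.ofReal (c' * h ^ (-1 - α'))) =
        ENNReal.ofReal (z ^ (-α')) •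
          (volume.restrict (Ioo (0:ℝ) 1)).withDensity
            fun r => ENNReal.ofReal (r ^ (-1 : ℝ) *
              (c' * r ^ ((1 - α') - 1) * (1 - r) ^ (α' - 1)))) :=
  ⟨map_div_add_withDensity_Ioi_rpow c γ hz,
    fun α _ => map_div_add_withDensity_Ioi_rpow_eq_smul 2 c α hz,
    fun α' _ c' _ => map_div_add_withDensity_Ioi_rpow_eq_smul 1 c' α' hz⟩

/-- The pushforward of the stable Lévy measure `c·h^{-1-γ} dh` on `(0,∞)` under
`φ_z : h ↦ h/(h+z)` is `c·z^{-γ}·r^{-1-γ}(1-r)^{γ-1} dr` on `(0,1)`; in particular it is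
`z^{-α}` times `r^{-2}·c·Beta(2-α,α)(dr)` for `α ∈ (0,2)`, and `z^{-α'}` times
`r^{-1}·c'·Beta(1-α',α')(dr)` for `α' ∈ (0,1)`. -/
theorem stmt0 (γ c z : ℝ) (hγ : 0 < γ) (hc : 0 < c) (hz : 0 < z) :
    (Measure.map (fun h : ℝ => h / (h + z))
        ((volume.restrict (Ioi (0:ℝ))).withDensity
          fun h => ENNReal.ofReal (c * h ^ (-1 - γ))) =
      (volume.restrict (Ioo (0:ℝ) 1)).withDensity
        fun r => ENNReal.ofReal (c * z ^ (-γ) * r ^ (-1 - γ) * (1 - r) ^ (γ - 1)))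
    ∧ (∀ α ∈ Ioo (0:ℝ) 2,
        Measure.map (fun h : ℝ => h / (h + z))
          ((volume.restrict (Ioi (0:ℝ))).withDensity
            fun h => ENNReal.ofReal (c * h ^ (-1 - α))) =
        ENNReal.ofReal (z ^ (-α)) •
          (volume.restrict (Ioo (0:ℝ) 1)).withDensity
            fun r => ENNReal.ofReal (r ^ (-2 : ℝ) *
              (c * r ^ ((2 - α) - 1) * (1 - r) ^ (α - 1))))
    ∧ (∀ α' ∈ Ioo (0:ℝ) 1, ∀ c' : ℝ, 0 < c' →
        Measure.map (fun h : ℝ => h / (h + z))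
          ((volume.restrict (Ioi (0:ℝ))).withDensity
            fun h => ENNReal.ofReal (c' * h ^ (-1 - α'))) =
        ENNReal.ofReal (z ^ (-α')) •
          (volume.restrict (Ioo (0:ℝ) 1)).withDensity
            fun r => ENNReal.ofReal (r ^ (-1 : ℝ) *
              (c' * r ^ ((1 - α') - 1) * (1 - r) ^ (α' - 1)))) :=
  stmt0_general γ c z hz
end

section
/- Let ν̂ be a nonzero σ-finite measure on (0,∞) with ∫₀^∞ (1 ∧ h²) ν̂(dh) < ∞. Suppose there exist a σ-finite measure ν on (0,1) and a function s : (0,∞) → (0,∞) such that for every z > 0 the pushforward of ν̂ under the map h ↦ h/(h+z) equals s(z)·ν. Then there exist constants c > 0 and α ∈ (0,2) such that ν̂ has density h ↦ c·h^{-1-α} with respect to Lebesgue measure on (0,∞). -/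
/-!
Write `G x = ν̂ (x, ∞)`. Since `h ↦ h / (h + z)` maps `(z x, ∞)` onto `(x / (x + 1), 1)`
for every `z`, the factorisation gives `G (z x) = s z · ν (x / (x + 1), 1)`, and eliminating
`s` and `ν` yields `G (z x) G 1 = G x G z`. Finiteness of `∫ 1 ∧ h²` makes `G` finite and
`ν̂ ≠ 0` makes it positive, so `G / G 1` is a monotone solution of Cauchy's multiplicative
equation, i.e. `G x = C x^(-α)`, with `α > 0` because `G` vanishes at infinity. The tail
determines the measure, so `ν̂(dh) = α C h^(-1-α) dh`, and integrability of `h²` against it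
near `0` forces `α < 2`.
-/

open MeasureTheory Real Set Filter Topology
open scoped ENNReal

theorem eq_mul_of_map_add_of_monotone {f : ℝ → ℝ} (hadd : ∀ a b, f (a + b) = f a + f b)
    (hf : Monotone f) (t : ℝ) : f t = t * f 1 := by
  have hrat : ∀ q : ℚ, f q = q * f 1 := fun q => by
    simpa using map_ratCast_smul (AddMonoidHom.mk' f hadd) ℝ ℝ q 1
  have h0 : f 0 = 0 := by simpa using hrat 0
  obtain ⟨q, hqt⟩ := exists_rat_lt t
  obtain ⟨r, htr⟩ := exists_rat_gt t
  rcases (h0 ▸ hf zero_le_one : 0 ≤ f 1).eq_or_lt with hzero | hpos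
  · have hq := hf hqt.le
    have hr := hf htr.le
    rw [hrat, ← hzero] at hq hr
    rw [← hzero]
    linarith
  · rw [← div_eq_iff hpos.ne']
    refine le_antisymm (le_of_forall_lt_rat_imp_le fun q hq => ?_)
      (le_of_forall_rat_lt_imp_le fun q hq => ?_)
    · rw [div_le_iff₀ hpos, ← hrat]; exact hf hq.le
    · rw [le_div_iff₀ hpos, ← hrat]; exact hf hq.le

theorem exists_rpow_of_map_mul {T : ℝ → ℝ} (hpos : ∀ x, 0 < x → 0 < T x)
    (hanti : AntitoneOn T (Ioi 0))
    (hmul : ∀ x, 0 < x → ∀ y, 0 < y → T (x * y) = T x * T y) :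
    ∃ β : ℝ, ∀ x, 0 < x → T x = x ^ β := by
  set u : ℝ → ℝ := fun t => -log (T (exp t))
  have hadd : ∀ a b, u (a + b) = u a + u b := fun a b => by
    simp only [u, exp_add, hmul _ (exp_pos a) _ (exp_pos b),
      log_mul (hpos _ (exp_pos a)).ne' (hpos _ (exp_pos b)).ne']
    ring
  have hmono : Monotone u := fun a b hab =>
    neg_le_neg (log_le_log (hpos _ (exp_pos b)) (hanti (exp_pos a) (exp_pos b) (exp_le_exp.2 hab)))
  refine ⟨-u 1, fun x hx => ?_⟩
  rw [rpow_def_of_pos hx, mul_neg, ← eq_mul_of_map_add_of_monotone hadd hmono]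
  simp only [u, exp_log hx, neg_neg, exp_log (hpos x hx)]

theorem exists_eq_ofReal_mul_rpow_neg {F : ℝ → ℝ≥0∞} (hanti : AntitoneOn F (Ioi 0))
    (hF1 : F 1 ≠ 0) (hF1' : F 1 ≠ ∞)
    (hmul : ∀ x, 0 < x → ∀ z, 0 < z → F (z * x) * F 1 = F x * F z)
    (hlim : Tendsto F atTop (𝓝 0)) :
    ∃ C > (0 : ℝ), ∃ α > (0 : ℝ), ∀ x, 0 < x → F x = ENNReal.ofReal (C * x ^ (-α)) := by
  -- `F 1 * F 1 = F x⁻¹ * F x` keeps every value of `F` off `0` and `∞`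
  have hF : ∀ x, 0 < x → F x ≠ 0 ∧ F x ≠ ∞ := by
    intro x hx
    have h := hmul x⁻¹ (inv_pos.2 hx) x hx
    rw [mul_inv_cancel₀ hx.ne'] at h
    have hsq : F 1 * F 1 ≠ 0 := mul_ne_zero hF1 hF1
    have hsq' : F 1 * F 1 ≠ ∞ := ENNReal.mul_ne_top hF1' hF1'
    refine ⟨fun h0 => hsq (by rw [h, h0, mul_zero]), fun htop => hsq' ?_⟩
    rw [h, htop, ENNReal.mul_top]
    exact fun h0 => hsq (by rw [h, h0, zero_mul])
  set C := (F 1).toReal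
  have hC : 0 < C := ENNReal.toReal_pos hF1 hF1'
  obtain ⟨β, hβ⟩ : ∃ β : ℝ, ∀ x, 0 < x → (F x).toReal / C = x ^ β := by
    refine exists_rpow_of_map_mul
      (fun x hx => div_pos (ENNReal.toReal_pos (hF x hx).1 (hF x hx).2) hC)
      (fun x hx y hy hxy => div_le_div_of_nonneg_right
        ((ENNReal.toReal_le_toReal (hF y (lt_of_lt_of_le hx hxy)).2 (hF x hx).2).2
          (hanti hx hy hxy)) hC.le) fun x hx y hy => ?_
    have h := congrArg ENNReal.toReal (hmul y hy x hx)
    rw [ENNReal.toReal_mul, ENNReal.toReal_mul] at h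
    field_simp
    linear_combination h
  have hFx : ∀ x, 0 < x → F x = ENNReal.ofReal (C * x ^ β) := fun x hx => by
    rw [← hβ x hx, mul_div_cancel₀ _ hC.ne', ENNReal.ofReal_toReal (hF x hx).2]
  refine ⟨C, hC, -β, ?_, fun x hx => by rw [neg_neg, hFx x hx]⟩
  by_contra! hβ0
  have hbound : ∀ᶠ x in atTop, ENNReal.ofReal C ≤ F x :=
    (eventually_ge_atTop 1).mono fun x hx => by
      rw [hFx x (zero_lt_one.trans_le hx)]
      exact ENNReal.ofReal_le_ofReal
        (le_mul_of_one_le_right hC.le (one_le_rpow hx (by linarith)))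
  exact (ENNReal.ofReal_pos.2 hC).ne' (nonpos_iff_eq_zero.1 (ge_of_tendsto hlim hbound))

theorem iUnion_Ioi_inv_nat_succ : ⋃ n : ℕ, Ioi ((n : ℝ) + 1)⁻¹ = Ioi 0 := by
  ext x
  simp only [mem_iUnion, mem_Ioi]
  refine ⟨fun ⟨n, hn⟩ => lt_trans (by positivity) hn, fun hx => ?_⟩
  obtain ⟨n, hn⟩ := exists_nat_gt x⁻¹
  exact ⟨n, inv_lt_of_inv_lt₀ hx (hn.trans (lt_add_one _))⟩

theorem tendsto_measure_Ioi_atTop {μ : Measure ℝ} {a : ℝ} (ha : μ (Ioi a) ≠ ∞) :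
    Tendsto (fun x => μ (Ioi x)) atTop (𝓝 0) := by
  have h := tendsto_measure_iInter_atTop (μ := μ) (s := Ioi)
    (fun _ => measurableSet_Ioi.nullMeasurableSet) (fun _ _ hab => Ioi_subset_Ioi hab) ⟨a, ha⟩
  have hempty : ⋂ x : ℝ, Ioi x = ∅ := iInter_eq_empty_iff.2 fun x => ⟨x, lt_irrefl x⟩
  rwa [hempty, measure_empty] at h

theorem ext_of_measure_Ioi {μ ρ : Measure ℝ} (hμ : μ (Ioi 0)ᶜ = 0) (hρ : ρ (Ioi 0)ᶜ = 0)
    (hfin : ∀ x, 0 < x → μ (Ioi x) ≠ ∞) (h : ∀ x, 0 < x → μ (Ioi x) = ρ (Ioi x)) :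
    μ = ρ := by
  have hμ' : μ.restrict (Ioi 0) = μ := Measure.restrict_eq_self_of_ae_mem (mem_ae_iff.2 hμ)
  have hρ' : ρ.restrict (Ioi 0) = ρ := Measure.restrict_eq_self_of_ae_mem (mem_ae_iff.2 hρ)
  rw [← hμ', ← hρ', ← iUnion_Ioi_inv_nat_succ, Measure.restrict_iUnion_congr]
  intro n
  have hε : (0 : ℝ) < ((n : ℝ) + 1)⁻¹ := by positivity
  have : IsFiniteMeasure (μ.restrict (Ioi ((n : ℝ) + 1)⁻¹)) :=
    ⟨by rw [Measure.restrict_apply_univ]; exact (hfin _ hε).lt_top⟩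
  refine ext_of_generate_finite _ (BorelSpace.measurable_eq.trans (borel_eq_generateFrom_Ioi ℝ))
    isPiSystem_Ioi ?_ ?_
  · rintro _ ⟨a, rfl⟩
    rw [Measure.restrict_apply measurableSet_Ioi, Measure.restrict_apply measurableSet_Ioi,
      Ioi_inter_Ioi]
    exact h _ (lt_sup_of_lt_right hε)
  · rw [Measure.restrict_apply_univ, Measure.restrict_apply_univ]
    exact h _ hε

theorem measure_Ioi_eq_map_div_add {μ : Measure ℝ} (hμ : μ (Ioi 0)ᶜ = 0) {x z : ℝ}
    (hx : 0 < x) (hz : 0 < z) :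
    μ (Ioi x) = μ.map (fun h => h / (h + z)) (Ioi (x / (x + z))) := by
  rw [Measure.map_apply (by fun_prop) measurableSet_Ioi,
    ← measure_inter_conull (s := (fun h => h / (h + z)) ⁻¹' Ioi (x / (x + z))) hμ]
  congr 1
  ext h
  simp only [mem_Ioi, mem_inter_iff, mem_preimage]
  constructor
  · intro hxh
    refine ⟨?_, hx.trans hxh⟩
    rw [div_lt_div_iff₀ (by linarith) (by linarith)]
    nlinarith
  · rintro ⟨hxh, hh⟩
    rw [div_lt_div_iff₀ (by linarith) (by linarith)] at hxh
    nlinarith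

theorem measure_Ioi_mul_mul_measure_Ioi_one {μ ν : Measure ℝ} (hμ : μ (Ioi 0)ᶜ = 0)
    {S : ℝ → ℝ≥0∞} (hmap : ∀ z > 0, μ.map (fun h => h / (h + z)) = S z • ν)
    {x z : ℝ} (hx : 0 < x) (hz : 0 < z) :
    μ (Ioi (z * x)) * μ (Ioi 1) = μ (Ioi x) * μ (Ioi z) := by
  have key : ∀ x, 0 < x → ∀ z, 0 < z → μ (Ioi (z * x)) = S z * ν (Ioi (x / (x + 1))) := by
    intro x hx z hz
    rw [measure_Ioi_eq_map_div_add hμ (mul_pos hz hx) hz, hmap z hz,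
      show z * x / (z * x + z) = x / (x + 1) by field_simp]
    rfl
  have h : μ (Ioi (z * x)) * μ (Ioi (1 * 1)) = μ (Ioi (1 * x)) * μ (Ioi (z * 1)) := by
    rw [key x hx z hz, key 1 one_pos 1 one_pos, key x hx 1 one_pos, key 1 one_pos z hz]
    ring
  simpa only [one_mul, mul_one] using h

theorem measure_Ioi_one_le_lintegral (μ : Measure ℝ) :
    μ (Ioi 1) ≤ ∫⁻ h, ENNReal.ofReal (min 1 (h ^ 2)) ∂μ := by
  rw [← lintegral_indicator_one measurableSet_Ioi]
  refine lintegral_mono fun h => ?_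
  by_cases hh : h ∈ Ioi (1 : ℝ)
  · rw [indicator_of_mem hh, Pi.one_apply, min_eq_left (by nlinarith [mem_Ioi.1 hh]),
      ENNReal.ofReal_one]
  · simp [indicator_of_notMem hh]

theorem measure_Ioi_one_ne_zero {μ : Measure ℝ} (hμ0 : μ ≠ 0) (hμ : μ (Ioi 0)ᶜ = 0)
    (hmul : ∀ x, 0 < x → ∀ z, 0 < z →
      μ (Ioi (z * x)) * μ (Ioi 1) = μ (Ioi x) * μ (Ioi z)) :
    μ (Ioi 1) ≠ 0 := by
  intro h1
  have htail : ∀ x, 0 < x → μ (Ioi x) = 0 := fun x hx =>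
    mul_self_eq_zero.1 (by rw [← hmul x hx x hx, h1, mul_zero])
  have hpos : μ (Ioi 0) = 0 := by
    rw [← iUnion_Ioi_inv_nat_succ]
    exact measure_iUnion_null fun n => htail _ (by positivity)
  exact hμ0 (Measure.measure_univ_eq_zero.1 (by rw [← union_compl_self (Ioi (0 : ℝ)),
    measure_union_null hpos hμ]))

theorem withDensity_rpow_apply_Ioi {c α x : ℝ} (hc : 0 ≤ c) (hα : 0 < α) (hx : 0 < x) :
    (volume.restrict (Ioi (0 : ℝ))).withDensity (fun h => ENNReal.ofReal (c * h ^ (-1 - α)))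
      (Ioi x) = ENNReal.ofReal (c / α * x ^ (-α)) := by
  rw [withDensity_apply _ measurableSet_Ioi, Measure.restrict_restrict measurableSet_Ioi,
    Ioi_inter_Ioi, sup_eq_left.2 hx.le, ← ofReal_integral_eq_lintegral_ofReal
      ((integrableOn_Ioi_rpow_of_lt (by linarith) hx).const_mul c)
      ((ae_restrict_iff' measurableSet_Ioi).2 (ae_of_all _ fun h hh =>
        mul_nonneg hc (rpow_nonneg (hx.trans hh).le _))),
    integral_const_mul, integral_Ioi_rpow_of_lt (by linarith) hx]
  congr 1
  rw [show -1 - α + 1 = -α by ring]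
  field_simp

theorem lt_two_of_lintegral_min_one_sq_lt_top {c α : ℝ} (hc : 0 < c)
    (h : ∫⁻ h, ENNReal.ofReal (min 1 (h ^ 2)) ∂(volume.restrict (Ioi (0 : ℝ))).withDensity
      (fun h => ENNReal.ofReal (c * h ^ (-1 - α))) < ∞) : α < 2 := by
  have hfin : ∫⁻ h in Ioo 0 1, ENNReal.ofReal (c * h ^ (1 - α)) < ∞ := by
    refine lt_of_le_of_lt ?_ h
    rw [lintegral_withDensity_eq_lintegral_mul _ (by fun_prop) (by fun_prop)]
    calc ∫⁻ h in Ioo 0 1, ENNReal.ofReal (c * h ^ (1 - α))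
        = ∫⁻ h in Ioo 0 1,
            ENNReal.ofReal (c * h ^ (-1 - α)) * ENNReal.ofReal (min 1 (h ^ 2)) := by
          refine setLIntegral_congr_fun measurableSet_Ioo fun h hh => ?_
          rw [← ENNReal.ofReal_mul (mul_nonneg hc.le (rpow_nonneg hh.1.le _)),
            min_eq_right (by nlinarith [hh.1, hh.2]), mul_assoc, ← rpow_natCast,
            ← rpow_add hh.1]
          norm_num
          ring_nf
      _ ≤ ∫⁻ h in Ioi 0,
            ENNReal.ofReal (c * h ^ (-1 - α)) * ENNReal.ofReal (min 1 (h ^ 2)) :=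
          lintegral_mono_set Ioo_subset_Ioi_self
  have hint : IntegrableOn (fun h : ℝ => c * h ^ (1 - α)) (Ioo 0 1) :=
    ⟨by fun_prop, (hasFiniteIntegral_iff_ofReal ((ae_restrict_iff' measurableSet_Ioo).2
      (ae_of_all _ fun h hh => mul_nonneg hc.le (rpow_nonneg hh.1.le _)))).2 hfin⟩
  have hpow : IntegrableOn (fun h : ℝ => h ^ (1 - α)) (Ioo 0 1) := by
    simpa only [IntegrableOn, inv_mul_cancel_left₀ hc.ne'] using hint.const_mul c⁻¹
  linarith [(intervalIntegral.integrableOn_Ioo_rpow_iff zero_lt_one).1 hpow]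

theorem stmt1_general (μ : Measure ℝ) (hμ0 : μ ≠ 0)
    (hcar : μ (Ioi (0:ℝ))ᶜ = 0)
    (hint : ∫⁻ h, ENNReal.ofReal (min 1 (h ^ 2)) ∂μ < ⊤)
    (hfac : ∃ ν : Measure ℝ, SigmaFinite ν ∧ ν (Ioo (0:ℝ) 1)ᶜ = 0 ∧
      ∃ s : ℝ → ℝ, (∀ z > (0:ℝ), 0 < s z) ∧
        ∀ z > (0:ℝ),
          Measure.map (fun h : ℝ => h / (h + z)) μ = ENNReal.ofReal (s z) • ν) :
    ∃ c > (0:ℝ), ∃ α ∈ Ioo (0:ℝ) 2,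
      μ = (volume.restrict (Ioi (0:ℝ))).withDensity
        fun h => ENNReal.ofReal (c * h ^ (-1 - α)) := by
  obtain ⟨ν, -, -, s, -, hmap⟩ := hfac
  have hmul := fun x (hx : 0 < x) z (hz : 0 < z) =>
    measure_Ioi_mul_mul_measure_Ioi_one (S := fun z => ENNReal.ofReal (s z)) hcar hmap hx hz
  have hfin : μ (Ioi 1) ≠ ∞ := ((measure_Ioi_one_le_lintegral μ).trans_lt hint).ne
  obtain ⟨C, hC, α, hα, htail⟩ := exists_eq_ofReal_mul_rpow_neg
    (F := fun x => μ (Ioi x)) (fun _ _ _ _ hab => measure_mono (Ioi_subset_Ioi hab))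
    (measure_Ioi_one_ne_zero hμ0 hcar hmul) hfin hmul (tendsto_measure_Ioi_atTop hfin)
  have hμ : μ = (volume.restrict (Ioi (0:ℝ))).withDensity
      fun h => ENNReal.ofReal (α * C * h ^ (-1 - α)) := by
    refine ext_of_measure_Ioi hcar (withDensity_absolutelyContinuous _ _
      (mem_ae_iff.1 (ae_restrict_mem measurableSet_Ioi))) (fun x hx => ?_) fun x hx => ?_
    · rw [htail x hx]; exact ENNReal.ofReal_ne_top
    · rw [htail x hx, withDensity_rpow_apply_Ioi (by positivity) hα hx,
        mul_div_cancel_left₀ _ hα.ne']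
  exact ⟨α * C, by positivity, α, ⟨hα, lt_two_of_lintegral_min_one_sq_lt_top (by positivity)
    (hμ ▸ hint)⟩, hμ⟩

/-- Necessity part of Lemma 5.4: if a Lévy measure `ν̂` on `(0,∞)` with
`∫ (1 ∧ h²) ν̂(dh) < ∞` is such that all its pushforwards under `h ↦ h/(h+z)`, `z > 0`,
factor as `s(z)·ν` for a fixed measure `ν` on `(0,1)`, then `ν̂(dh) = c·h^{-1-α} dh`
for some `c > 0` and `α ∈ (0,2)`. -/
theorem stmt1 (μ : Measure ℝ) [SigmaFinite μ] (hμ0 : μ ≠ 0)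
    (hcar : μ (Ioi (0:ℝ))ᶜ = 0)
    (hint : ∫⁻ h, ENNReal.ofReal (min 1 (h ^ 2)) ∂μ < ⊤)
    (hfac : ∃ ν : Measure ℝ, SigmaFinite ν ∧ ν (Ioo (0:ℝ) 1)ᶜ = 0 ∧
      ∃ s : ℝ → ℝ, (∀ z > (0:ℝ), 0 < s z) ∧
        ∀ z > (0:ℝ),
          Measure.map (fun h : ℝ => h / (h + z)) μ = ENNReal.ofReal (s z) • ν) :
    ∃ c > (0:ℝ), ∃ α ∈ Ioo (0:ℝ) 2,
      μ = (volume.restrict (Ioi (0:ℝ))).withDensity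
        fun h => ENNReal.ofReal (c * h ^ (-1 - α)) :=
  stmt1_general μ hμ0 hcar hint hfac
end

section
/- Let η be a finite measure on [0,1] with total mass z := η([0,1]) > 0, let ρ := z⁻¹η, let φ : [0,1] → ℝ be bounded measurable, m ≥ 1 an integer, and let ψ : (0,∞) → ℝ be differentiable at z. Define F on finite measures by F(μ) := ψ(|μ|)·⟨φ, μ/|μ|⟩^m. Then for every a ∈ [0,1] the Gateaux derivative of F at η in direction δ_a exists and equals F'(η;a) = ψ'(z)·⟨φ,ρ⟩^m + m·(ψ(z)/z)·(φ(a)·⟨φ,ρ⟩^{m-1} − ⟨φ,ρ⟩^m). -/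
open MeasureTheory
open scoped Topology

/-! Adding mass `ε` at `a` turns the total mass into `z + ε` and `∫ φ dη` into `∫ φ dη + ε φ(a)`,
so `F(η + ε δ_a)` is an explicit real function of `ε`; the Gateaux derivative is its right
derivative at `0`, given by the product, quotient and power rules. -/

theorem hasDerivAt_perturbed_mean_pow {𝕜 : Type*} [NontriviallyNormedField 𝕜] {z : 𝕜}
    (hz : z ≠ 0) (I c : 𝕜) (m : ℕ) :
    HasDerivAt (fun s : 𝕜 => ((z + s)⁻¹ * (I + s * c)) ^ m)
      (m * z⁻¹ * (c * (z⁻¹ * I) ^ (m - 1) - (z⁻¹ * I) ^ m)) 0 := by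
  have hinv : HasDerivAt (fun s : 𝕜 => (z + s)⁻¹) (-1 / z ^ 2) 0 := by
    simpa using ((hasDerivAt_id (0 : 𝕜)).const_add z).fun_inv (by simpa using hz)
  have hlin : HasDerivAt (fun s : 𝕜 => I + s * c) c 0 := by
    simpa using ((hasDerivAt_id (0 : 𝕜)).mul_const c).const_add I
  refine ((hinv.fun_mul hlin).fun_pow m).congr_deriv ?_
  have hslope : -1 / z ^ 2 * I + z⁻¹ * c = z⁻¹ * (c - z⁻¹ * I) := by field_simp; ring
  simp only [add_zero, zero_mul, hslope]
  generalize z⁻¹ * I = r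
  cases m with
  | zero => simp
  | succ k => simp only [Nat.add_sub_cancel]; ring

theorem integral_add_smul_dirac {α E : Type*} [MeasurableSpace α] [MeasurableSingletonClass α]
    [NormedAddCommGroup E] [NormedSpace ℝ E] [CompleteSpace E]
    {μ : Measure α} {f : α → E} (hf : Integrable f μ) (a : α) {s : ℝ} (hs : 0 ≤ s) :
    ∫ x, f x ∂(μ + ENNReal.ofReal s • Measure.dirac a) = ∫ x, f x ∂μ + s • f a := by
  rw [integral_add_measure hf ((integrable_dirac enorm_lt_top).smul_measure ENNReal.ofReal_ne_top),
    integral_smul_measure, integral_dirac, ENNReal.toReal_ofReal hs]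

theorem stmt4_general (η : Measure unitInterval) [IsFiniteMeasure η] (hη : η Set.univ ≠ 0)
    (φ : unitInterval → ℝ) (hφm : Measurable φ) (C : ℝ) (hφb : ∀ x, |φ x| ≤ C)
    (m : ℕ) (ψ : ℝ → ℝ) (ψ' : ℝ)
    (hψ : HasDerivAt ψ ψ' (η Set.univ).toReal) (a : unitInterval) :
    Filter.Tendsto
      (fun ε : ℝ =>
        ε⁻¹ * (ψ ((η Set.univ).toReal + ε) *
            ((((η Set.univ).toReal + ε)⁻¹ *
              ∫ x, φ x ∂(η + ENNReal.ofReal ε • Measure.dirac a)) ^ m)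
          - ψ ((η Set.univ).toReal) * (∫ x, φ x ∂((η Set.univ)⁻¹ • η)) ^ m))
      (𝓝[>] 0)
      (𝓝 (ψ' * (∫ x, φ x ∂((η Set.univ)⁻¹ • η)) ^ m
        + (m : ℝ) * (ψ ((η Set.univ).toReal) / (η Set.univ).toReal) *
          (φ a * (∫ x, φ x ∂((η Set.univ)⁻¹ • η)) ^ (m - 1)
            - (∫ x, φ x ∂((η Set.univ)⁻¹ • η)) ^ m))) := by
  set z := (η Set.univ).toReal
  have hz : z ≠ 0 := (ENNReal.toReal_pos hη (measure_ne_top η _)).ne'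
  have hφ : Integrable φ η :=
    .of_bound hφm.aestronglyMeasurable C (.of_forall fun x => (Real.norm_eq_abs _).trans_le (hφb x))
  have hmean : ∫ x, φ x ∂((η Set.univ)⁻¹ • η) = z⁻¹ * ∫ x, φ x ∂η := by
    rw [integral_smul_measure, ENNReal.toReal_inv, smul_eq_mul]
  have hderiv := ((HasDerivAt.comp_const_add z 0 (by rwa [add_zero])).mul
    (hasDerivAt_perturbed_mean_pow hz (∫ x, φ x ∂η) (φ a) m)).tendsto_slope_zero_right
  rw [hmean]
  convert hderiv.congr' ?_ using 2
  · simp only [add_zero]; ring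
  · filter_upwards [self_mem_nhdsWithin] with ε (hε : 0 < ε)
    rw [integral_add_smul_dirac hφ a hε.le]
    simp [smul_eq_mul]

/-- First Gateaux derivative of `F(μ) = ψ(|μ|)·⟨φ, μ/|μ|⟩^m` at `η` in direction `δ_a`:
it equals `ψ'(z)⟨φ,ρ⟩^m + m(ψ(z)/z)(φ(a)⟨φ,ρ⟩^{m-1} − ⟨φ,ρ⟩^m)`. -/
theorem stmt4 (η : Measure unitInterval) [IsFiniteMeasure η] (hη : η Set.univ ≠ 0)
    (φ : unitInterval → ℝ) (hφm : Measurable φ) (C : ℝ) (hφb : ∀ x, |φ x| ≤ C)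
    (m : ℕ) (hm : 1 ≤ m) (ψ : ℝ → ℝ) (ψ' : ℝ)
    (hψ : HasDerivAt ψ ψ' (η Set.univ).toReal) (a : unitInterval) :
    Filter.Tendsto
      (fun ε : ℝ =>
        ε⁻¹ * (ψ ((η Set.univ).toReal + ε) *
            ((((η Set.univ).toReal + ε)⁻¹ *
              ∫ x, φ x ∂(η + ENNReal.ofReal ε • Measure.dirac a)) ^ m)
          - ψ ((η Set.univ).toReal) * (∫ x, φ x ∂((η Set.univ)⁻¹ • η)) ^ m))
      (𝓝[>] 0)
      (𝓝 (ψ' * (∫ x, φ x ∂((η Set.univ)⁻¹ • η)) ^ m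
        + (m : ℝ) * (ψ ((η Set.univ).toReal) / (η Set.univ).toReal) *
          (φ a * (∫ x, φ x ∂((η Set.univ)⁻¹ • η)) ^ (m - 1)
            - (∫ x, φ x ∂((η Set.univ)⁻¹ • η)) ^ m))) :=
  stmt4_general η hη φ hφm C hφb m ψ ψ' hψ a
end

section
/- Let η be a finite measure on [0,1] with total mass z := η([0,1]) > 0, let ρ := z⁻¹η, let φ : [0,1] → ℝ be bounded measurable, m ≥ 2 an integer, and σ², β ≥ 0. With F'(η;a) := (m/z)·(φ(a)⟨φ,ρ⟩^{m-1} − ⟨φ,ρ⟩^m) and F''(η;a,b) := (m/z²)·[(m−1)·φ(a)φ(b)·⟨φ,ρ⟩^{m-2} − m·(φ(a)+φ(b))·⟨φ,ρ⟩^{m-1} + (m+1)·⟨φ,ρ⟩^m] (the first and second Gateaux derivatives of μ ↦ ⟨φ,μ/|μ|⟩^m), one has (σ²/2)·∫₀¹ F''(η;a,a) η(da) + β·F'(η;0) = z⁻¹·[ σ²·(m(m−1)/2)·(⟨φ²,ρ⟩·⟨φ,ρ⟩^{m-2} − ⟨φ,ρ⟩^m) + β·m·(φ(0)·⟨φ,ρ⟩^{m-1}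 − ⟨φ,ρ⟩^m) ]. -/
open MeasureTheory Real Set

/-!
Expanding `F''(η;a,a)` as a polynomial in `φ a`, its `η`-integral only involves `z`,
`⟨φ,η⟩ = z⟨φ,ρ⟩` and `⟨φ²,η⟩ = z⟨φ²,ρ⟩`. Inside the common factor `m / z`, the terms of degree
`≤ 1` in `φ a` give `-2m⟨φ,ρ⟩^{m-1}⟨φ,ρ⟩ + (m+1)⟨φ,ρ⟩^m = -(m-1)⟨φ,ρ⟩^m`, the Fleming–Viot
resampling term.
-/

variable {α : Type*} [MeasurableSpace α]

theorem integral_inv_measure_univ_smul (μ : Measure α) (f : α → ℝ) :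
    ∫ x, f x ∂((μ univ)⁻¹ • μ) = (μ.real univ)⁻¹ * ∫ x, f x ∂μ := by
  rw [integral_smul_measure, ENNReal.toReal_inv, smul_eq_mul, measureReal_def]

theorem integral_const_mul_quadratic {μ : Measure α} [IsFiniteMeasure μ] {f : α → ℝ}
    (hf : Integrable f μ) (hf2 : Integrable (fun x => f x * f x) μ) (k a p b q c : ℝ) :
    ∫ x, k * (a * (f x * f x) * p - b * (f x + f x) * q + c) ∂μ
      = k * (a * p * ∫ x, f x * f x ∂μ - 2 * b * q * ∫ x, f x ∂μ + c * μ.real univ) := by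
  have hlin : ∀ x, a * (f x * f x) * p - b * (f x + f x) * q + c
      = a * p * (f x * f x) - 2 * b * q * f x + c := fun x => by ring
  have hquad : Integrable (fun x => a * p * (f x * f x)) μ := hf2.const_mul _
  have hlinear : Integrable (fun x => 2 * b * q * f x) μ := hf.const_mul _
  simp_rw [hlin]
  rw [integral_const_mul, integral_add (hquad.sub' hlinear) (integrable_const c),
    integral_sub hquad hlinear, integral_const_mul, integral_const_mul, integral_const, smul_eq_mul,
    mul_comm c]

theorem stmt6_general (η : Measure unitInterval) [IsFiniteMeasure η]
    (φ : unitInterval → ℝ) (hφm : Measurable φ) (C : ℝ) (hφb : ∀ x, |φ x| ≤ C)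
    (m : ℕ) (σ2 β : ℝ) :
    (σ2 / 2) *
        ∫ a, ((m : ℝ) / (η Set.univ).toReal ^ 2) *
          (((m : ℝ) - 1) * (φ a * φ a) * (∫ x, φ x ∂((η Set.univ)⁻¹ • η)) ^ (m - 2)
            - (m : ℝ) * (φ a + φ a) * (∫ x, φ x ∂((η Set.univ)⁻¹ • η)) ^ (m - 1)
            + ((m : ℝ) + 1) * (∫ x, φ x ∂((η Set.univ)⁻¹ • η)) ^ m) ∂η
      + β * (((m : ℝ) / (η Set.univ).toReal) *
          (φ 0 * (∫ x, φ x ∂((η Set.univ)⁻¹ • η)) ^ (m - 1)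
            - (∫ x, φ x ∂((η Set.univ)⁻¹ • η)) ^ m)) =
    ((η Set.univ).toReal)⁻¹ *
      (σ2 * ((m : ℝ) * ((m : ℝ) - 1) / 2) *
          ((∫ x, φ x ^ 2 ∂((η Set.univ)⁻¹ • η)) *
              (∫ x, φ x ∂((η Set.univ)⁻¹ • η)) ^ (m - 2)
            - (∫ x, φ x ∂((η Set.univ)⁻¹ • η)) ^ m)
        + β * (m : ℝ) *
          (φ 0 * (∫ x, φ x ∂((η Set.univ)⁻¹ • η)) ^ (m - 1)
            - (∫ x, φ x ∂((η Set.univ)⁻¹ • η)) ^ m)) := by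
  rcases eq_or_ne (η univ) 0 with hη | hη
  · simp [Measure.measure_univ_eq_zero.mp hη]
  have hbound : ∀ᵐ x ∂η, ‖φ x‖ ≤ C := ae_of_all _ hφb
  have hφ : Integrable φ η := .of_bound hφm.aestronglyMeasurable C hbound
  simp only [sq (φ _)]
  rw [integral_const_mul_quadratic hφ (hφ.bdd_mul hφm.aestronglyMeasurable hbound),
    integral_inv_measure_univ_smul, integral_inv_measure_univ_smul, ← measureReal_def]
  have hz : η.real univ ≠ 0 := by simpa [measureReal_def, ENNReal.toReal_eq_zero_iff] using hη
  generalize η.real univ = z at hz ⊢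
  generalize ∫ x, φ x * φ x ∂η = B
  obtain ⟨I, hI⟩ : ∃ I, ∫ x, φ x ∂η = z * I := ⟨z⁻¹ * ∫ x, φ x ∂η, by field_simp⟩
  -- the factor `m` makes this hold at `m = 0` despite the truncated `m - 1`
  have hpow : (m : ℝ) * I ^ (m - 1) * I = m * I ^ m := by
    cases m <;> simp [pow_succ, mul_assoc]
  rw [hI, inv_mul_cancel_left₀ hz]
  field_simp
  linear_combination (-2 * m * σ2 * z) * hpow

/-- Lemma 5.2 of the paper for product test functions: with
`F'(η;a) = (m/z)(φ(a)⟨φ,ρ⟩^{m-1} − ⟨φ,ρ⟩^m)` and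
`F''(η;a,b) = (m/z²)[(m−1)φ(a)φ(b)⟨φ,ρ⟩^{m-2} − m(φ(a)+φ(b))⟨φ,ρ⟩^{m-1} + (m+1)⟨φ,ρ⟩^m]`,
the continuous part of the measure-valued branching generator factorizes as `z⁻¹` times the
Fleming-Viot-with-immigration generator. -/
theorem stmt6 (η : Measure unitInterval) [IsFiniteMeasure η] (hη : η Set.univ ≠ 0)
    (φ : unitInterval → ℝ) (hφm : Measurable φ) (C : ℝ) (hφb : ∀ x, |φ x| ≤ C)
    (m : ℕ) (hm : 2 ≤ m) (σ2 β : ℝ) (hσ : 0 ≤ σ2) (hβ : 0 ≤ β) :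
    (σ2 / 2) *
        ∫ a, ((m : ℝ) / (η Set.univ).toReal ^ 2) *
          (((m : ℝ) - 1) * (φ a * φ a) * (∫ x, φ x ∂((η Set.univ)⁻¹ • η)) ^ (m - 2)
            - (m : ℝ) * (φ a + φ a) * (∫ x, φ x ∂((η Set.univ)⁻¹ • η)) ^ (m - 1)
            + ((m : ℝ) + 1) * (∫ x, φ x ∂((η Set.univ)⁻¹ • η)) ^ m) ∂η
      + β * (((m : ℝ) / (η Set.univ).toReal) *
          (φ 0 * (∫ x, φ x ∂((η Set.univ)⁻¹ • η)) ^ (m - 1)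
            - (∫ x, φ x ∂((η Set.univ)⁻¹ • η)) ^ m)) =
    ((η Set.univ).toReal)⁻¹ *
      (σ2 * ((m : ℝ) * ((m : ℝ) - 1) / 2) *
          ((∫ x, φ x ^ 2 ∂((η Set.univ)⁻¹ • η)) *
              (∫ x, φ x ∂((η Set.univ)⁻¹ • η)) ^ (m - 2)
            - (∫ x, φ x ∂((η Set.univ)⁻¹ • η)) ^ m)
        + β * (m : ℝ) *
          (φ 0 * (∫ x, φ x ∂((η Set.univ)⁻¹ • η)) ^ (m - 1)
            - (∫ x, φ x ∂((η Set.univ)⁻¹ • η)) ^ m)) :=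
  stmt6_general η φ hφm C hφb m σ2 β
end

section
/- Let η be a finite measure on [0,1] with total mass z := η([0,1]) > 0, let ρ := z⁻¹η, let φ : [0,1] → ℝ be bounded measurable, m ≥ 2 an integer, ψ : (0,∞) → ℝ twice differentiable at z, and σ², β ≥ 0. With F'(η;a) := ψ'(z)·⟨φ,ρ⟩^m + m·(ψ(z)/z)·(φ(a)⟨φ,ρ⟩^{m-1} − ⟨φ,ρ⟩^m) and F''(η;a,b) := ψ''(z)·⟨φ,ρ⟩^m + m·(ψ'(z)/z)·[(φ(a)+φ(b))⟨φ,ρ⟩^{m-1} − 2⟨φ,ρ⟩^m] + m·(ψ(z)/z²)·[(m−1)φ(a)φ(b)⟨φ,ρ⟩^{m-2} − m(φ(a)+φ(b))⟨φ,ρ⟩^{m-1} + (m+1)⟨φ,ρ⟩^m], one has (σ²/2)·∫₀¹ F''(η;a,a) η(da) + β·F'(η;0) = [ z·(σ²/2)·ψ''(z) + β·ψ'(z) ]·⟨φ,ρ⟩^m + (ψ(z)/z)·[ σ²·(m(m−1)/2)·(⟨φ²,ρ⟩·⟨φ,ρ⟩^{m-2} − ⟨φ,ρ⟩^m) + β·m·(φ(0)·⟨φ,ρ⟩^{m-1}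 − ⟨φ,ρ⟩^m) ]. -/
/-!
Write `z` for the mass of `η`, `P = ⟨φ,ρ⟩` and `Q = ⟨φ²,ρ⟩`. The diagonal `F''(η;a,a)` is a
quadratic polynomial in `φ(a)`, and integrating it against `η = z • ρ` turns `φ(a)` into `z P` and
`φ(a)²` into `z Q`. The `ψ'` terms then cancel, since `(φ(a) + φ(a)) P^(m-1) - 2 P^m` has
`η`-integral zero, and the `ψ` terms collapse to `(m(m-1)/z) ψ(z) (Q P^(m-2) - P^m)`, which is
the Fleming–Viot part; the immigration term `β F'(η;0)` is already of the required form.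
-/

open MeasureTheory Set

namespace MeasureTheory

variable {α : Type*} [MeasurableSpace α]

theorem integral_inv_measure_univ_smul (μ : Measure α) (g : α → ℝ) :
    ∫ x, g x ∂((μ univ)⁻¹ • μ) = (μ univ).toReal⁻¹ * ∫ x, g x ∂μ := by
  rw [integral_smul_measure, ENNReal.toReal_inv, smul_eq_mul]

theorem integral_eq_mass_mul_integral_normalized (μ : Measure α)
    [IsFiniteMeasure μ] (hμ : μ univ ≠ 0) (g : α → ℝ) :
    ∫ x, g x ∂μ = (μ univ).toReal * ∫ x, g x ∂((μ univ)⁻¹ • μ) := by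
  have hz : (μ univ).toReal ≠ 0 := ENNReal.toReal_ne_zero.2 ⟨hμ, measure_ne_top μ univ⟩
  rw [integral_inv_measure_univ_smul, mul_inv_cancel_left₀ hz]

theorem integral_quadratic {μ : Measure α} [IsFiniteMeasure μ] {f : α → ℝ}
    (hf : Integrable f μ) (hf2 : Integrable (fun x ↦ f x ^ 2) μ) (c₀ c₁ c₂ : ℝ) :
    ∫ x, (c₀ + c₁ * f x + c₂ * f x ^ 2) ∂μ
      = c₀ * μ.real univ + c₁ * ∫ x, f x ∂μ + c₂ * ∫ x, f x ^ 2 ∂μ := by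
  have hlin : Integrable (fun x ↦ c₀ + c₁ * f x) μ := (integrable_const c₀).add (hf.const_mul c₁)
  rw [integral_add hlin (hf2.const_mul c₂),
    integral_add (integrable_const c₀) (hf.const_mul c₁), integral_const, smul_eq_mul,
    integral_const_mul, integral_const_mul, mul_comm (μ.real univ)]

theorem integral_secondVariation_diag (η : Measure α) [IsFiniteMeasure η]
    (hη : η univ ≠ 0) {φ : α → ℝ} (hφ : Integrable φ η)
    (hφ2 : Integrable (fun x ↦ φ x ^ 2) η) {m : ℕ} (hm : 2 ≤ m) (ψ₀ ψ₁ ψ₂ : ℝ) :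
    ∫ a, (ψ₂ * (∫ x, φ x ∂((η univ)⁻¹ • η)) ^ m
          + (m : ℝ) * (ψ₁ / (η univ).toReal) *
            ((φ a + φ a) * (∫ x, φ x ∂((η univ)⁻¹ • η)) ^ (m - 1)
              - 2 * (∫ x, φ x ∂((η univ)⁻¹ • η)) ^ m)
          + (m : ℝ) * (ψ₀ / (η univ).toReal ^ 2) *
            (((m : ℝ) - 1) * (φ a * φ a) * (∫ x, φ x ∂((η univ)⁻¹ • η)) ^ (m - 2)
              - (m : ℝ) * (φ a + φ a) * (∫ x, φ x ∂((η univ)⁻¹ • η)) ^ (m - 1)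
              + ((m : ℝ) + 1) * (∫ x, φ x ∂((η univ)⁻¹ • η)) ^ m)) ∂η
      = (η univ).toReal * ψ₂ * (∫ x, φ x ∂((η univ)⁻¹ • η)) ^ m
        + (m : ℝ) * ((m : ℝ) - 1) * (ψ₀ / (η univ).toReal) *
          ((∫ x, φ x ^ 2 ∂((η univ)⁻¹ • η)) * (∫ x, φ x ∂((η univ)⁻¹ • η)) ^ (m - 2)
            - (∫ x, φ x ∂((η univ)⁻¹ • η)) ^ m) := by
  obtain ⟨k, rfl⟩ : ∃ k, m = k + 2 := ⟨m - 2, by omega⟩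
  have hz : (η univ).toReal ≠ 0 := ENNReal.toReal_ne_zero.2 ⟨hη, measure_ne_top η univ⟩
  have hP := integral_eq_mass_mul_integral_normalized η hη φ
  have hQ := integral_eq_mass_mul_integral_normalized η hη (fun x ↦ φ x ^ 2)
  set z := (η univ).toReal with hz_def
  set P := ∫ x, φ x ∂((η univ)⁻¹ • η)
  set Q := ∫ x, φ x ^ 2 ∂((η univ)⁻¹ • η)
  simp only [Nat.add_sub_cancel, Nat.add_succ_sub_one]
  trans ∫ a, ((ψ₂ - 2 * (k + 2) * (ψ₁ / z) + (k + 2) * (k + 3) * (ψ₀ / z ^ 2)) * P ^ (k + 2)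
      + 2 * (k + 2) * (ψ₁ / z - (k + 2) * (ψ₀ / z ^ 2)) * P ^ (k + 1) * φ a
      + (k + 2) * (k + 1) * (ψ₀ / z ^ 2) * P ^ k * φ a ^ 2) ∂η
  · congr 1; ext a; push_cast; ring
  rw [integral_quadratic hφ hφ2, hP, hQ, measureReal_def, ← hz_def]
  push_cast
  field_simp
  ring

end MeasureTheory

theorem stmt7_general (η : Measure unitInterval) [IsFiniteMeasure η] (hη : η Set.univ ≠ 0)
    (φ : unitInterval → ℝ) (hφm : Measurable φ) (C : ℝ) (hφb : ∀ x, |φ x| ≤ C)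
    (m : ℕ) (hm : 2 ≤ m) (ψ ψ' : ℝ → ℝ) (ψ'' : ℝ)
    (σ2 β : ℝ) :
    (σ2 / 2) *
        ∫ a, (ψ'' * (∫ x, φ x ∂((η Set.univ)⁻¹ • η)) ^ m
          + (m : ℝ) * (ψ' ((η Set.univ).toReal) / (η Set.univ).toReal) *
            ((φ a + φ a) * (∫ x, φ x ∂((η Set.univ)⁻¹ • η)) ^ (m - 1)
              - 2 * (∫ x, φ x ∂((η Set.univ)⁻¹ • η)) ^ m)
          + (m : ℝ) * (ψ ((η Set.univ).toReal) / (η Set.univ).toReal ^ 2) *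
            (((m : ℝ) - 1) * (φ a * φ a) * (∫ x, φ x ∂((η Set.univ)⁻¹ • η)) ^ (m - 2)
              - (m : ℝ) * (φ a + φ a) * (∫ x, φ x ∂((η Set.univ)⁻¹ • η)) ^ (m - 1)
              + ((m : ℝ) + 1) * (∫ x, φ x ∂((η Set.univ)⁻¹ • η)) ^ m)) ∂η
      + β * (ψ' ((η Set.univ).toReal) * (∫ x, φ x ∂((η Set.univ)⁻¹ • η)) ^ m
          + (m : ℝ) * (ψ ((η Set.univ).toReal) / (η Set.univ).toReal) *
            (φ 0 * (∫ x, φ x ∂((η Set.univ)⁻¹ • η)) ^ (m - 1)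
              - (∫ x, φ x ∂((η Set.univ)⁻¹ • η)) ^ m)) =
    ((η Set.univ).toReal * (σ2 / 2) * ψ'' + β * ψ' ((η Set.univ).toReal)) *
        (∫ x, φ x ∂((η Set.univ)⁻¹ • η)) ^ m
      + (ψ ((η Set.univ).toReal) / (η Set.univ).toReal) *
        (σ2 * ((m : ℝ) * ((m : ℝ) - 1) / 2) *
            ((∫ x, φ x ^ 2 ∂((η Set.univ)⁻¹ • η)) *
                (∫ x, φ x ∂((η Set.univ)⁻¹ • η)) ^ (m - 2)
              - (∫ x, φ x ∂((η Set.univ)⁻¹ • η)) ^ m)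
          + β * (m : ℝ) *
            (φ 0 * (∫ x, φ x ∂((η Set.univ)⁻¹ • η)) ^ (m - 1)
              - (∫ x, φ x ∂((η Set.univ)⁻¹ • η)) ^ m)) := by
  have hφ : Integrable φ η := .of_bound hφm.aestronglyMeasurable C (.of_forall hφb)
  have hφ2 : Integrable (fun x ↦ φ x ^ 2) η :=
    .of_bound (hφm.pow_const 2).aestronglyMeasurable (C ^ 2) (.of_forall fun x ↦ by
      simpa only [norm_pow, Real.norm_eq_abs] using pow_le_pow_left₀ (abs_nonneg _) (hφb x) 2)
  rw [integral_secondVariation_diag η hη hφ hφ2 hm]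
  ring

/-- Generator decomposition from the proof of Proposition 3.4: for test functions
`F(η) = ψ(|η|)⟨φ,η/|η|⟩^m`, the continuous part of the measure-valued branching generator
splits into the total-mass CBI generator acting on `ψ` plus `z⁻¹` times the
Fleming-Viot-with-immigration generator acting on `ρ`. -/
theorem stmt7 (η : Measure unitInterval) [IsFiniteMeasure η] (hη : η Set.univ ≠ 0)
    (φ : unitInterval → ℝ) (hφm : Measurable φ) (C : ℝ) (hφb : ∀ x, |φ x| ≤ C)
    (m : ℕ) (hm : 2 ≤ m) (ψ ψ' : ℝ → ℝ) (ψ'' : ℝ)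
    (hψ : HasDerivAt ψ (ψ' (η Set.univ).toReal) (η Set.univ).toReal)
    (hψ' : HasDerivAt ψ' ψ'' (η Set.univ).toReal)
    (σ2 β : ℝ) (hσ : 0 ≤ σ2) (hβ : 0 ≤ β) :
    (σ2 / 2) *
        ∫ a, (ψ'' * (∫ x, φ x ∂((η Set.univ)⁻¹ • η)) ^ m
          + (m : ℝ) * (ψ' ((η Set.univ).toReal) / (η Set.univ).toReal) *
            ((φ a + φ a) * (∫ x, φ x ∂((η Set.univ)⁻¹ • η)) ^ (m - 1)
              - 2 * (∫ x, φ x ∂((η Set.univ)⁻¹ • η)) ^ m)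
          + (m : ℝ) * (ψ ((η Set.univ).toReal) / (η Set.univ).toReal ^ 2) *
            (((m : ℝ) - 1) * (φ a * φ a) * (∫ x, φ x ∂((η Set.univ)⁻¹ • η)) ^ (m - 2)
              - (m : ℝ) * (φ a + φ a) * (∫ x, φ x ∂((η Set.univ)⁻¹ • η)) ^ (m - 1)
              + ((m : ℝ) + 1) * (∫ x, φ x ∂((η Set.univ)⁻¹ • η)) ^ m)) ∂η
      + β * (ψ' ((η Set.univ).toReal) * (∫ x, φ x ∂((η Set.univ)⁻¹ • η)) ^ m
          + (m : ℝ) * (ψ ((η Set.univ).toReal) / (η Set.univ).toReal) *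
            (φ 0 * (∫ x, φ x ∂((η Set.univ)⁻¹ • η)) ^ (m - 1)
              - (∫ x, φ x ∂((η Set.univ)⁻¹ • η)) ^ m)) =
    ((η Set.univ).toReal * (σ2 / 2) * ψ'' + β * ψ' ((η Set.univ).toReal)) *
        (∫ x, φ x ∂((η Set.univ)⁻¹ • η)) ^ m
      + (ψ ((η Set.univ).toReal) / (η Set.univ).toReal) *
        (σ2 * ((m : ℝ) * ((m : ℝ) - 1) / 2) *
            ((∫ x, φ x ^ 2 ∂((η Set.univ)⁻¹ • η)) *
                (∫ x, φ x ∂((η Set.univ)⁻¹ • η)) ^ (m - 2)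
              - (∫ x, φ x ∂((η Set.univ)⁻¹ • η)) ^ m)
          + β * (m : ℝ) *
            (φ 0 * (∫ x, φ x ∂((η Set.univ)⁻¹ • η)) ^ (m - 1)
              - (∫ x, φ x ∂((η Set.univ)⁻¹ • η)) ^ m)) :=
  stmt7_general η hη φ hφm C hφb m hm ψ ψ' ψ'' σ2 β
end

section
/- Let ρ be a probability measure on [0,1], let p ≥ 1 be an integer, let g : [0,1]^p → ℝ be bounded measurable and symmetric, and let r ∈ [0,1]. Then | ∫₀¹ ( ∫ g d((1−r)·ρ + r·δ_a)^{⊗p} − ∫ g dρ^{⊗p} ) ρ(da) | ≤ 2^{p+1}·‖g‖_∞·r², where ‖g‖_∞ is the supremum norm of g. -/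
/-!
Expanding the product of the mixtures `(1 - r) ρ + r δ_a` coordinate by coordinate writes
`∫ g d((1 - r) ρ + r δ_a)^{⊗p}` as a sum over the sets `t` of coordinates sampled from `δ_a`,
with weights `r^|t| (1 - r)^(p - |t|)` summing to `1`, of the `ρ^{⊗p}`-integral of `g` with
the coordinates in `t` frozen at `a`. After integrating in `a` against `ρ`, Fubini shows that
the terms with `|t| ≤ 1` are exactly `∫ g dρ^{⊗p}`, so only the terms with `|t| ≥ 2` survive:
each has weight at most `r²` and size at most `2C`, and there are at most `2^p` of them.
-/

open MeasureTheory Real Set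

open Finset ENNReal

theorem sum_pow_mul_one_sub_pow_compl {ι : Type*} [Fintype ι] [DecidableEq ι] (r : ℝ) :
    ∑ t : Finset ι, r ^ #t * (1 - r) ^ #tᶜ = 1 := by
  simpa [card_compl] using Fintype.sum_pow_mul_eq_add_pow ι r (1 - r)

theorem pow_mul_one_sub_pow_le_sq {r : ℝ} (hr : r ∈ Icc (0 : ℝ) 1) {k : ℕ} (hk : 2 ≤ k) (m : ℕ) :
    r ^ k * (1 - r) ^ m ≤ r ^ 2 :=
  calc r ^ k * (1 - r) ^ m ≤ r ^ k * 1 :=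
        mul_le_mul_of_nonneg_left (pow_le_one₀ (sub_nonneg.2 hr.2) (by linarith [hr.1]))
          (pow_nonneg hr.1 k)
    _ ≤ r ^ 2 := by rw [mul_one]; exact pow_le_pow_of_le_one hr.1 hr.2 hk

theorem Measurable.finset_piecewise {ι β : Type*} {X : ι → Type*} [∀ i, MeasurableSpace (X i)]
    [MeasurableSpace β] [DecidableEq ι] {f g : β → ∀ i, X i} (hf : Measurable f)
    (hg : Measurable g) (t : Finset ι) :
    Measurable (fun y => t.piecewise (f y) (g y)) := by
  refine measurable_pi_lambda _ fun i => ?_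
  by_cases hi : i ∈ t
  · simpa only [Finset.piecewise_eq_of_mem _ _ _ hi] using hf.eval
  · simpa only [Finset.piecewise_eq_of_notMem _ _ _ hi] using hg.eval

theorem measurable_piecewise_fst_snd {ι α : Type*} [DecidableEq ι] [MeasurableSpace α]
    (t : Finset ι) :
    Measurable (fun q : α × (ι → α) => t.piecewise (fun _ => q.1) q.2) :=
  (measurable_pi_lambda _ fun _ => measurable_fst).finset_piecewise measurable_snd t

namespace MeasureTheory

section Bounded

variable {β : Type*} [MeasurableSpace β] {μ : Measure β} {f : β → ℝ} {C : ℝ}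

theorem _root_.Measurable.integrable_of_abs_le [IsFiniteMeasure μ] (hf : Measurable f)
    (hfC : ∀ x, |f x| ≤ C) : Integrable f μ :=
  .of_bound hf.aestronglyMeasurable C
    (ae_of_all _ fun x => (Real.norm_eq_abs (f x)).trans_le (hfC x))

theorem abs_integral_le_of_abs_le [IsProbabilityMeasure μ] (hfC : ∀ x, |f x| ≤ C) :
    |∫ x, f x ∂μ| ≤ C := by
  simpa using norm_integral_le_of_norm_le_const (μ := μ)
    (ae_of_all _ fun x => (Real.norm_eq_abs (f x)).trans_le (hfC x))

end Bounded

section Pi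

variable {ι : Type*} [Fintype ι] [DecidableEq ι] {X : ι → Type*} [∀ i, MeasurableSpace (X i)]

namespace Measure

theorem pi_add_eq_sum_pi_piecewise (μ ν : ∀ i, Measure (X i)) [∀ i, IsFiniteMeasure (μ i)]
    [∀ i, IsFiniteMeasure (ν i)] :
    Measure.pi (fun i => μ i + ν i) = ∑ t : Finset ι, Measure.pi (t.piecewise ν μ) := by
  have (t : Finset ι) (i : ι) : IsFiniteMeasure (t.piecewise ν μ i) :=
    t.piecewise_cases ν μ (fun m : Measure (X i) => IsFiniteMeasure m) inferInstance inferInstance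
  refine pi_eq fun A _ => ?_
  have happly (t : Finset ι) (i : ι) :
      t.piecewise ν μ i (A i) = t.piecewise (fun i => ν i (A i)) (fun i => μ i (A i)) i := by
    by_cases hi : i ∈ t <;> simp [hi]
  simp_rw [finsetSum_apply, pi_pi, add_apply, add_comm (μ _ _), Fintype.prod_add, happly,
    prod_piecewise, Finset.univ_inter]
  rfl

omit [DecidableEq ι] in
theorem pi_smul (c : ι → ℝ≥0∞) (hc : ∀ i, c i ≠ ∞) (μ : ∀ i, Measure (X i))
    [∀ i, IsFiniteMeasure (μ i)] :
    Measure.pi (fun i => c i • μ i) = (∏ i, c i) • Measure.pi μ := by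
  have (i : ι) : IsFiniteMeasure (c i • μ i) := smul_finite _ (hc i)
  refine pi_eq fun A _ => ?_
  simp [pi_pi, prod_mul_distrib]

theorem pi_piecewise_dirac (ρ : ∀ i, Measure (X i)) [∀ i, IsProbabilityMeasure (ρ i)]
    (t : Finset ι) (a : ∀ i, X i) :
    Measure.pi (t.piecewise (fun i => dirac (a i)) ρ)
      = (Measure.pi ρ).map (fun x => t.piecewise a x) := by
  have (i : ι) : IsProbabilityMeasure (t.piecewise (fun i => dirac (a i)) ρ i) :=
    t.piecewise_cases _ ρ (fun m : Measure (X i) => IsProbabilityMeasure m)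
      inferInstance inferInstance
  refine pi_eq fun A hA => ?_
  have hpre : (fun x => t.piecewise a x) ⁻¹' univ.pi A
      = univ.pi (t.piecewise (fun i => (fun _ => a i) ⁻¹' A i) A) := by
    ext x
    simp only [Set.mem_preimage, mem_univ_pi]
    refine forall_congr' fun i => ?_
    by_cases hi : i ∈ t <;> simp [hi]
  rw [map_apply (measurable_const.finset_piecewise measurable_id' t) (.univ_pi hA), hpre, pi_pi]
  refine Fintype.prod_congr _ _ fun i => ?_
  by_cases hi : i ∈ t <;> by_cases ha : a i ∈ A i <;> simp [hi, ha, dirac_apply' _ (hA i)]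

end Measure

theorem measurePreserving_update_prod (μ : ∀ i, Measure (X i))
    [∀ i, IsProbabilityMeasure (μ i)] (i : ι) :
    MeasurePreserving (fun q : X i × (∀ j, X j) => Function.update q.2 i q.1)
      ((μ i).prod (Measure.pi μ)) (Measure.pi μ) := by
  have hmeas : Measurable (fun q : X i × (∀ j, X j) => Function.update q.2 i q.1) :=
    measurable_update' (a := i) |>.comp (measurable_snd.prodMk measurable_fst)
  refine ⟨hmeas, (Measure.pi_eq fun A hA => ?_).symm⟩
  have hpre : (fun q : X i × (∀ j, X j) => Function.update q.2 i q.1) ⁻¹' univ.pi A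
      = A i ×ˢ univ.pi (Function.update A i univ) := by
    ext ⟨y, x⟩
    simp only [Set.mem_preimage, mem_univ_pi, mem_prod, Function.forall_update_iff]
    refine and_congr_right' (forall_congr' fun j => ?_)
    by_cases hj : j = i
    · subst hj; simp
    · simp [hj]
  have hupd (j : ι) :
      μ j (Function.update A i univ j) = Function.update (fun j => μ j (A j)) i 1 j := by
    rw [Function.apply_update (fun j s => μ j s), measure_univ]
  rw [Measure.map_apply hmeas (.univ_pi hA), hpre, Measure.prod_prod, Measure.pi_pi]
  simp_rw [hupd]
  rw [prod_update_of_mem (Finset.mem_univ i), one_mul,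
    prod_eq_mul_prod_sdiff_singleton_of_mem (Finset.mem_univ i) (fun j => μ j (A j))]

theorem integral_integral_update (μ : ∀ i, Measure (X i)) [∀ i, IsProbabilityMeasure (μ i)]
    (i : ι) {g : (∀ j, X j) → ℝ} (hg : Integrable g (Measure.pi μ)) :
    ∫ y, ∫ x, g (Function.update x i y) ∂Measure.pi μ ∂μ i = ∫ x, g x ∂Measure.pi μ := by
  have hmp := measurePreserving_update_prod μ i
  calc ∫ y, ∫ x, g (Function.update x i y) ∂Measure.pi μ ∂μ i
      = ∫ q, g (Function.update q.2 i q.1) ∂(μ i).prod (Measure.pi μ) :=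
        (integral_prod _ (hmp.integrable_comp_of_integrable hg)).symm
    _ = ∫ x, g x ∂Measure.pi μ := by
        rw [← integral_map hmp.measurable.aemeasurable
          (by rw [hmp.map_eq]; exact hg.aestronglyMeasurable), hmp.map_eq]

end Pi

section Mixture

variable {ι α : Type*} [Fintype ι] [DecidableEq ι] [MeasurableSpace α]

theorem Measure.pi_smul_add_smul_dirac (ρ : Measure α) [IsProbabilityMeasure ρ] (a : α)
    {u v : ℝ≥0∞} (hu : u ≠ ∞) (hv : v ≠ ∞) :
    Measure.pi (fun _ : ι => v • ρ + u • dirac a)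
      = ∑ t : Finset ι, (u ^ #t * v ^ #tᶜ) •
          (Measure.pi fun _ => ρ).map (fun x => t.piecewise (fun _ => a) x) := by
  have : IsFiniteMeasure (u • dirac a) := Measure.smul_finite _ hu
  have : IsFiniteMeasure (v • ρ) := Measure.smul_finite _ hv
  rw [Measure.pi_add_eq_sum_pi_piecewise]
  refine Fintype.sum_congr _ _ fun t => ?_
  have : ∀ i, IsFiniteMeasure (t.piecewise (fun _ => dirac a) (fun _ => ρ) i) := fun i =>
    t.piecewise_cases (fun _ => dirac a) (fun _ => ρ) (fun m : Measure α => IsFiniteMeasure m)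
      inferInstance inferInstance
  have hsplit : t.piecewise (fun _ => u • dirac a) (fun _ => v • ρ) = fun i =>
      t.piecewise (fun _ => u) (fun _ => v) i • t.piecewise (fun _ => dirac a) (fun _ => ρ) i := by
    ext1 i; by_cases hi : i ∈ t <;> simp [hi]
  rw [hsplit, Measure.pi_smul (fun i => t.piecewise (fun _ => u) (fun _ => v) i)
      (fun i => t.piecewise_cases (fun _ => u) (fun _ => v) (fun c : ℝ≥0∞ => c ≠ ∞) hu hv)
      (fun i => t.piecewise (fun _ => dirac a) (fun _ => ρ) i),
    Measure.pi_piecewise_dirac (fun _ => ρ) t (fun _ => a), prod_piecewise, Finset.univ_inter,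
    prod_const, prod_const]
  rfl

theorem integral_pi_smul_add_smul_dirac (ρ : Measure α) [IsProbabilityMeasure ρ] (a : α)
    {r : ℝ} (hr : r ∈ Icc (0 : ℝ) 1) {g : (ι → α) → ℝ} (hg : Measurable g) {C : ℝ}
    (hgC : ∀ x, |g x| ≤ C) :
    ∫ x, g x ∂Measure.pi (fun _ : ι =>
        ENNReal.ofReal (1 - r) • ρ + ENNReal.ofReal r • Measure.dirac a)
      = ∑ t : Finset ι, r ^ #t * (1 - r) ^ #tᶜ *
          ∫ x, g (t.piecewise (fun _ => a) x) ∂Measure.pi fun _ => ρ := by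
  rw [Measure.pi_smul_add_smul_dirac ρ a ofReal_ne_top ofReal_ne_top,
    integral_finsetSum_measure]
  · refine Fintype.sum_congr _ _ fun t => ?_
    have hr0 := hr.1
    have hr1 : 0 ≤ 1 - r := sub_nonneg.2 hr.2
    rw [integral_smul_measure, integral_map
      (measurable_const.finset_piecewise measurable_id' t).aemeasurable hg.aestronglyMeasurable,
      smul_eq_mul, ← ofReal_pow hr0, ← ofReal_pow hr1, ← ofReal_mul (by positivity),
      toReal_ofReal (by positivity)]
  · exact fun t _ => (hg.integrable_of_abs_le hgC).smul_measure (by finiteness)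

theorem integral_integral_piecewise_of_card_le_one (ρ : Measure α) [IsProbabilityMeasure ρ]
    {t : Finset ι} (ht : #t ≤ 1) {g : (ι → α) → ℝ} (hg : Integrable g (Measure.pi fun _ => ρ)) :
    ∫ a, ∫ x, g (t.piecewise (fun _ => a) x) ∂Measure.pi (fun _ => ρ) ∂ρ
      = ∫ x, g x ∂Measure.pi fun _ => ρ := by
  rcases Nat.le_one_iff_eq_zero_or_eq_one.mp ht with ht | ht
  · rw [Finset.card_eq_zero.mp ht]
    simp
  · obtain ⟨i, rfl⟩ := card_eq_one.mp ht
    simp_rw [Finset.piecewise_singleton]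
    exact integral_integral_update (fun _ => ρ) i hg

theorem integral_integral_pi_smul_add_smul_dirac_sub (ρ : Measure α) [IsProbabilityMeasure ρ]
    {r : ℝ} (hr : r ∈ Icc (0 : ℝ) 1) {g : (ι → α) → ℝ} (hg : Measurable g) {C : ℝ}
    (hgC : ∀ x, |g x| ≤ C) :
    ∫ a, ((∫ x, g x ∂Measure.pi (fun _ : ι =>
        ENNReal.ofReal (1 - r) • ρ + ENNReal.ofReal r • Measure.dirac a))
        - ∫ x, g x ∂Measure.pi fun _ => ρ) ∂ρ
      = ∑ t : Finset ι, r ^ #t * (1 - r) ^ #tᶜ *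
          ((∫ a, ∫ x, g (t.piecewise (fun _ => a) x) ∂Measure.pi (fun _ => ρ) ∂ρ)
            - ∫ x, g x ∂Measure.pi fun _ => ρ) := by
  have hint (t : Finset ι) :
      Integrable (fun a => ∫ x, g (t.piecewise (fun _ => a) x) ∂Measure.pi fun _ => ρ) ρ := by
    refine .of_bound ?_ C (ae_of_all _ fun a => (Real.norm_eq_abs _).trans_le
      (abs_integral_le_of_abs_le fun x => hgC _))
    exact (hg.comp (measurable_piecewise_fst_snd t)).stronglyMeasurable.integral_prod_right'
      |>.aestronglyMeasurable
  simp_rw [integral_pi_smul_add_smul_dirac ρ _ hr hg hgC, mul_sub, sum_sub_distrib, ← sum_mul,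
    sum_pow_mul_one_sub_pow_compl, one_mul]
  rw [integral_sub (integrable_finsetSum _ fun t _ => (hint t).const_mul _) (integrable_const _),
    integral_finsetSum _ fun t _ => (hint t).const_mul _]
  simp [integral_const_mul]

theorem abs_pow_mul_one_sub_pow_mul_integral_sub_le (ρ : Measure α) [IsProbabilityMeasure ρ]
    {r : ℝ} (hr : r ∈ Icc (0 : ℝ) 1) {g : (ι → α) → ℝ} (hg : Measurable g) {C : ℝ}
    (hgC : ∀ x, |g x| ≤ C) (t : Finset ι) :
    |r ^ #t * (1 - r) ^ #tᶜ *
        ((∫ a, ∫ x, g (t.piecewise (fun _ => a) x) ∂Measure.pi (fun _ => ρ) ∂ρ)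
          - ∫ x, g x ∂Measure.pi fun _ => ρ)| ≤ 2 * C * r ^ 2 := by
  have hI : |∫ x, g x ∂Measure.pi fun _ => ρ| ≤ C := abs_integral_le_of_abs_le hgC
  rcases le_or_gt #t 1 with ht | ht
  · rw [integral_integral_piecewise_of_card_le_one ρ ht (hg.integrable_of_abs_le hgC), sub_self,
      mul_zero, abs_zero]
    have := (abs_nonneg _).trans hI
    positivity
  · have hH : |∫ a, ∫ x, g (t.piecewise (fun _ => a) x) ∂Measure.pi (fun _ => ρ) ∂ρ| ≤ C :=
      abs_integral_le_of_abs_le fun a => abs_integral_le_of_abs_le fun x => hgC _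
    have hr1 : 0 ≤ 1 - r := sub_nonneg.2 hr.2
    rw [abs_mul, abs_of_nonneg (mul_nonneg (pow_nonneg hr.1 _) (pow_nonneg hr1 _))]
    calc _ ≤ r ^ 2 * (C + C) :=
          mul_le_mul (pow_mul_one_sub_pow_le_sq hr ht _) ((abs_sub _ _).trans (add_le_add hH hI))
            (abs_nonneg _) (sq_nonneg r)
      _ = 2 * C * r ^ 2 := by ring

end Mixture

end MeasureTheory

theorem stmt11_general (ρ : Measure unitInterval) [IsProbabilityMeasure ρ]
    (p : ℕ)
    (g : (Fin p → unitInterval) → ℝ) (hgm : Measurable g)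
    (C : ℝ) (hgb : ∀ x, |g x| ≤ C)
    (r : ℝ) (hr : r ∈ Icc (0:ℝ) 1) :
    |∫ a, ((∫ x, g x ∂(Measure.pi fun _ : Fin p =>
          ENNReal.ofReal (1 - r) • ρ + ENNReal.ofReal r • Measure.dirac a))
        - ∫ x, g x ∂(Measure.pi fun _ : Fin p => ρ)) ∂ρ|
      ≤ 2 ^ (p + 1) * C * r ^ 2 := by
  rw [integral_integral_pi_smul_add_smul_dirac_sub ρ hr hgm hgb]
  calc _ ≤ ∑ t : Finset (Fin p), |r ^ #t * (1 - r) ^ #tᶜ *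
          ((∫ a, ∫ x, g (t.piecewise (fun _ => a) x) ∂Measure.pi (fun _ => ρ) ∂ρ)
            - ∫ x, g x ∂Measure.pi fun _ => ρ)| := abs_sum_le_sum_abs _ _
    _ ≤ ∑ _t : Finset (Fin p), 2 * C * r ^ 2 :=
          sum_le_sum fun t _ => abs_pow_mul_one_sub_pow_mul_integral_sub_le ρ hr hgm hgb t
    _ = 2 ^ (p + 1) * C * r ^ 2 := by simp [Fintype.card_finset]; ring

/-- Bound from the proof of Lemma 5.1 (reproduction part): after integrating the sampled
individual `a` with respect to `ρ`, the first-order term of the mixture expansion vanishes and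
`|∫ (∫ g d((1−r)ρ + rδ_a)^{⊗p} − ∫ g dρ^{⊗p}) ρ(da)| ≤ 2^{p+1} ‖g‖_∞ r²`. -/
theorem stmt11 (ρ : Measure unitInterval) [IsProbabilityMeasure ρ]
    (p : ℕ) (hp : 1 ≤ p)
    (g : (Fin p → unitInterval) → ℝ) (hgm : Measurable g)
    (C : ℝ) (hgb : ∀ x, |g x| ≤ C)
    (hsym : ∀ σ : Equiv.Perm (Fin p), ∀ x : Fin p → unitInterval, g (x ∘ σ) = g x)
    (r : ℝ) (hr : r ∈ Icc (0:ℝ) 1) :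
    |∫ a, ((∫ x, g x ∂(Measure.pi fun _ : Fin p =>
          ENNReal.ofReal (1 - r) • ρ + ENNReal.ofReal r • Measure.dirac a))
        - ∫ x, g x ∂(Measure.pi fun _ : Fin p => ρ)) ∂ρ|
      ≤ 2 ^ (p + 1) * C * r ^ 2 :=
  stmt11_general ρ p g hgm C hgb r hr
end

section
/- Let Λ₀ and Λ₁ be finite measures on [0,1]. There exists a finite measure Λ on [0,1] satisfying both (A) for all integers n ≥ 2 and all 2 ≤ k ≤ n: ∫₀¹ x^{k−2}(1−x)^{n−k} Λ₁(dx) = ∫₀¹ x^{k−2}(1−x)^{n+1−k} Λ(dx), and (B) for all integers n ≥ 1 and all 1 ≤ k ≤ n: ∫₀¹ x^{k−1}(1−x)^{n−k} Λ₀(dx) = ∫₀¹ x^{k−1}(1−x)^{n−k} Λ(dx), if and only if Λ₁ is the measure with density x ↦ (1−x) with respect to Λ₀ (i.e. Λ₁(dx) = (1−x)Λ₀(dx)); and in that case necessarily Λ = Λ₀. -/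
/-!
Taking `k = n` in (B) shows that `Λ` and `Λ₀` have the same moments, and taking `k = n` in (A)
that the moments of `Λ₁` are those of `(1 - x) Λ(dx)`. A finite measure on `[0,1]` is determined
by its moments, because polynomials are dense in `C([0,1], ℝ)` (Weierstrass) and integration
against a finite measure is continuous for the sup norm. Conversely, if `Λ₁(dx) = (1 - x) Λ₀(dx)`
then `Λ = Λ₀` works, as `(1 - x) x^(k-2) (1 - x)^(n-k) = x^(k-2) (1 - x)^(n+1-k)` for `k ≤ n`.
-/

open MeasureTheory Set
open scoped unitInterval

section CompactSpace

variable {X : Type*} [TopologicalSpace X] [CompactSpace X] [MeasurableSpace X]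

lemma ContinuousMap.integrable [OpensMeasurableSpace X] (μ : Measure X) [IsFiniteMeasure μ]
    (f : C(X, ℝ)) : Integrable f μ :=
  f.continuous.integrable_of_hasCompactSupport (.of_compactSpace _)

lemma ContinuousMap.lipschitzWith_integral [OpensMeasurableSpace X] (μ : Measure X)
    [IsFiniteMeasure μ] :
    LipschitzWith ⟨μ.real univ, measureReal_nonneg⟩ fun f : C(X, ℝ) => ∫ x, f x ∂μ := by
  refine LipschitzWith.of_dist_le_mul fun f g => ?_
  calc dist (∫ x, f x ∂μ) (∫ x, g x ∂μ)
      = ‖∫ x, BoundedContinuousFunction.mkOfCompact (f - g) x ∂μ‖ := by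
        rw [dist_eq_norm, ← integral_sub (f.integrable μ) (g.integrable μ)]; rfl
    _ ≤ μ.real univ * ‖BoundedContinuousFunction.mkOfCompact (f - g)‖ :=
        BoundedContinuousFunction.norm_integral_le_mul_norm μ _
    _ = μ.real univ * dist f g := by
        rw [BoundedContinuousFunction.norm_mkOfCompact, dist_eq_norm]

theorem MeasureTheory.ext_of_forall_integral_eq_of_dense [BorelSpace X] [HasOuterApproxClosed X]
    {μ ν : Measure X} [IsFiniteMeasure μ] [IsFiniteMeasure ν] {S : Set C(X, ℝ)} (hS : Dense S)
    (h : ∀ f ∈ S, ∫ x, f x ∂μ = ∫ x, f x ∂ν) : μ = ν := by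
  have hclosed : IsClosed {f : C(X, ℝ) | ∫ x, f x ∂μ = ∫ x, f x ∂ν} :=
    isClosed_eq (ContinuousMap.lipschitzWith_integral μ).continuous
      (ContinuousMap.lipschitzWith_integral ν).continuous
  have hall := hS.closure_eq ▸ hclosed.closure_subset_iff.mpr h
  exact ext_of_forall_integral_eq_of_IsFiniteMeasure fun f => hall (mem_univ f.toContinuousMap)

end CompactSpace

namespace unitInterval

theorem ext_of_forall_integral_pow_eq {μ ν : Measure I} [IsFiniteMeasure μ] [IsFiniteMeasure ν]
    (h : ∀ m : ℕ, ∫ x, (x : ℝ) ^ m ∂μ = ∫ x, (x : ℝ) ^ m ∂ν) : μ = ν := by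
  have hdense : Dense (polynomialFunctions I : Set C(I, ℝ)) := by
    rw [dense_iff_closure_eq, ← Subalgebra.topologicalClosure_coe,
      polynomialFunctions_closure_eq_top', Algebra.coe_top]
  refine ext_of_forall_integral_eq_of_dense hdense ?_
  rw [polynomialFunctions_coe]
  rintro _ ⟨p, rfl⟩
  induction p using Polynomial.induction_on' with
  | add p q hp hq =>
    simp only [map_add, ContinuousMap.add_apply]
    rw [integral_add (ContinuousMap.integrable μ _) (ContinuousMap.integrable μ _),
      integral_add (ContinuousMap.integrable ν _) (ContinuousMap.integrable ν _), hp, hq]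
  | monomial n a => simp [integral_const_mul, h n]

lemma integral_withDensity_one_sub (μ : Measure I) (g : I → ℝ) :
    ∫ x, g x ∂(μ.withDensity fun x => ENNReal.ofReal (1 - (x : ℝ))) =
      ∫ x, (1 - (x : ℝ)) * g x ∂μ := by
  rw [integral_withDensity_eq_integral_toReal_smul (by fun_prop) (by simp)]
  simp [ENNReal.toReal_ofReal (one_minus_nonneg _)]

instance isFiniteMeasure_withDensity_one_sub (μ : Measure I) [IsFiniteMeasure μ] :
    IsFiniteMeasure (μ.withDensity fun x => ENNReal.ofReal (1 - (x : ℝ))) :=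
  isFiniteMeasure_withDensity_ofReal
    (ContinuousMap.integrable μ ⟨fun x : I => 1 - (x : ℝ), by fun_prop⟩).hasFiniteIntegral

end unitInterval

/-- Lemma 4.1 of the paper (measure-theoretic content): there is a finite measure `Λ` on `[0,1]`
matching the M-coalescent jump rates, i.e. satisfying
(A) `∫ x^{k−2}(1−x)^{n−k} Λ₁(dx) = ∫ x^{k−2}(1−x)^{n+1−k} Λ(dx)` for all `2 ≤ k ≤ n`, and
(B) `∫ x^{k−1}(1−x)^{n−k} Λ₀(dx) = ∫ x^{k−1}(1−x)^{n−k} Λ(dx)` for all `1 ≤ k ≤ n`,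
if and only if `Λ₁(dx) = (1−x)Λ₀(dx)`; and any such `Λ` necessarily equals `Λ₀`. -/
theorem stmt14 (Λ₀ Λ₁ : Measure unitInterval)
    [IsFiniteMeasure Λ₀] [IsFiniteMeasure Λ₁] :
    ((∃ Λ : Measure unitInterval, IsFiniteMeasure Λ ∧
        (∀ n : ℕ, 2 ≤ n → ∀ k : ℕ, 2 ≤ k → k ≤ n →
          ∫ x, ((x : ℝ) ^ (k - 2) * (1 - (x : ℝ)) ^ (n - k)) ∂Λ₁ =
          ∫ x, ((x : ℝ) ^ (k - 2) * (1 - (x : ℝ)) ^ (n + 1 - k)) ∂Λ) ∧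
        (∀ n : ℕ, 1 ≤ n → ∀ k : ℕ, 1 ≤ k → k ≤ n →
          ∫ x, ((x : ℝ) ^ (k - 1) * (1 - (x : ℝ)) ^ (n - k)) ∂Λ₀ =
          ∫ x, ((x : ℝ) ^ (k - 1) * (1 - (x : ℝ)) ^ (n - k)) ∂Λ)) ↔
      Λ₁ = Λ₀.withDensity (fun x => ENNReal.ofReal (1 - (x : ℝ))))
    ∧ (∀ Λ : Measure unitInterval, IsFiniteMeasure Λ →
        (∀ n : ℕ, 2 ≤ n → ∀ k : ℕ, 2 ≤ k → k ≤ n →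
          ∫ x, ((x : ℝ) ^ (k - 2) * (1 - (x : ℝ)) ^ (n - k)) ∂Λ₁ =
          ∫ x, ((x : ℝ) ^ (k - 2) * (1 - (x : ℝ)) ^ (n + 1 - k)) ∂Λ) →
        (∀ n : ℕ, 1 ≤ n → ∀ k : ℕ, 1 ≤ k → k ≤ n →
          ∫ x, ((x : ℝ) ^ (k - 1) * (1 - (x : ℝ)) ^ (n - k)) ∂Λ₀ =
          ∫ x, ((x : ℝ) ^ (k - 1) * (1 - (x : ℝ)) ^ (n - k)) ∂Λ) →
        Λ = Λ₀) := by
  have eq_of_B : ∀ Λ : Measure I, IsFiniteMeasure Λ →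
      (∀ n : ℕ, 1 ≤ n → ∀ k : ℕ, 1 ≤ k → k ≤ n →
        ∫ x, ((x : ℝ) ^ (k - 1) * (1 - (x : ℝ)) ^ (n - k)) ∂Λ₀ =
        ∫ x, ((x : ℝ) ^ (k - 1) * (1 - (x : ℝ)) ^ (n - k)) ∂Λ) → Λ = Λ₀ :=
    fun Λ _ hB => unitInterval.ext_of_forall_integral_pow_eq fun m => by
      simpa using (hB (m + 1) (by omega) (m + 1) (by omega) le_rfl).symm
  refine ⟨⟨fun ⟨Λ, hΛ, hA, hB⟩ => ?_, fun hΛ₁ => ⟨Λ₀, inferInstance, ?_, fun _ _ _ _ _ => rfl⟩⟩,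
    fun Λ hΛ _ hB => eq_of_B Λ hΛ hB⟩
  · obtain rfl := eq_of_B Λ hΛ hB
    refine unitInterval.ext_of_forall_integral_pow_eq fun m => ?_
    rw [unitInterval.integral_withDensity_one_sub]
    simpa [mul_comm] using hA (m + 2) (by omega) (m + 2) (by omega) le_rfl
  · intro n _ k _ hkn
    rw [hΛ₁, unitInterval.integral_withDensity_one_sub, show n + 1 - k = n - k + 1 by omega]
    congr 1 with x
    ring
end
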